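/- Let 0 ≤ β < 1 and set a₀ = √(2(1−β²)). The Hessian matrix of V_β at the lamellar point (a₀, 0, 0) has eigenvalues 12(1−β²), 6(1−β²) + 12β√(1−β²), and 6(1−β²) − 12β√(1−β²). In particular, this Hessian is positive definite if and only if 0 ≤ β < 1/√5. -/

import Mathlib

/-!
At `(a₀, 0, 0)` the Hessian of `V_β` splits into the `1 × 1` block `9a₀² - 6(1 - β²) = 12(1 - β²)`
and the `2 × 2` block `[[d, s], [s, d]]` with `d = 6(1 - β²)` and `s = 6√2 β a₀ = 12β√(1 - β²)`,
whose eigenvectors are `(1, ±1)`. Positive definiteness thus amounts to `s < d`, that is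
`2β < √(1 - β²)`, that is `5β² < 1`.
-/

/-- The Lyapunov function `V_β` of the amplitude ODE system. -/
noncomputable def V (β a b c : ℝ) : ℝ :=
  -3 * (1 - β ^ 2) * (a ^ 2 + b ^ 2 + c ^ 2) + 6 * Real.sqrt 2 * β * (a * b * c)
    + 3 * (a ^ 2 * b ^ 2 + b ^ 2 * c ^ 2 + a ^ 2 * c ^ 2)
    + 3 / 4 * (a ^ 4 + b ^ 4 + c ^ 4)

/-- Partial derivative of a function of three real variables in the first variable. -/
noncomputable def pA (f : ℝ → ℝ → ℝ → ℝ) (a b c : ℝ) : ℝ := deriv (fun t => f t b c) a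

/-- Partial derivative in the second variable. -/
noncomputable def pB (f : ℝ → ℝ → ℝ → ℝ) (a b c : ℝ) : ℝ := deriv (fun t => f a t c) b

/-- Partial derivative in the third variable. -/
noncomputable def pC (f : ℝ → ℝ → ℝ → ℝ) (a b c : ℝ) : ℝ := deriv (fun t => f a b t) c

/-- The Hessian matrix of `V_β` (matrix of second partial derivatives). -/
noncomputable def hessV (β a b c : ℝ) : Matrix (Fin 3) (Fin 3) ℝ :=
  !![pA (pA (V β)) a b c, pA (pB (V β)) a b c, pA (pC (V β)) a b c;
     pB (pA (V β)) a b c, pB (pB (V β)) a b c, pB (pC (V β)) a b c;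
     pC (pA (V β)) a b c, pC (pB (V β)) a b c, pC (pC (V β)) a b c]

/-- `μ` is an eigenvalue of the real matrix `M`. -/
def Matrix.HasEigenvalueR {n : ℕ} (M : Matrix (Fin n) (Fin n) ℝ) (μ : ℝ) : Prop :=
  ∃ v : Fin n → ℝ, v ≠ 0 ∧ M.mulVec v = μ • v

lemma pA_V (β : ℝ) : pA (V β) = fun a b c ↦
    -6 * (1 - β ^ 2) * a + 6 * √2 * β * (b * c) + 6 * a * b ^ 2 + 6 * a * c ^ 2 + 3 * a ^ 3 := by
  ext a b c
  simp (disch := fun_prop) [pA, V, deriv_fun_add, deriv_fun_mul]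
  ring

lemma pB_V (β : ℝ) : pB (V β) = fun a b c ↦
    -6 * (1 - β ^ 2) * b + 6 * √2 * β * (a * c) + 6 * b * a ^ 2 + 6 * b * c ^ 2 + 3 * b ^ 3 := by
  ext a b c
  simp (disch := fun_prop) [pB, V, deriv_fun_add, deriv_fun_mul]
  ring

lemma pC_V (β : ℝ) : pC (V β) = fun a b c ↦
    -6 * (1 - β ^ 2) * c + 6 * √2 * β * (a * b) + 6 * c * a ^ 2 + 6 * c * b ^ 2 + 3 * c ^ 3 := by
  ext a b c
  simp (disch := fun_prop) [pC, V, deriv_fun_add, deriv_fun_mul]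
  ring

lemma hessV_eq (β a b c : ℝ) : hessV β a b c =
    !![-6 * (1 - β ^ 2) + 9 * a ^ 2 + 6 * b ^ 2 + 6 * c ^ 2, 12 * a * b + 6 * √2 * β * c,
        12 * a * c + 6 * √2 * β * b;
      12 * a * b + 6 * √2 * β * c, -6 * (1 - β ^ 2) + 6 * a ^ 2 + 9 * b ^ 2 + 6 * c ^ 2,
        12 * b * c + 6 * √2 * β * a;
      12 * a * c + 6 * √2 * β * b, 12 * b * c + 6 * √2 * β * a,
        -6 * (1 - β ^ 2) + 6 * a ^ 2 + 6 * b ^ 2 + 9 * c ^ 2] := by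
  rw [hessV, pA_V, pB_V, pC_V]
  simp (disch := fun_prop) only [pA, pB, pC, deriv_fun_add, deriv_fun_mul, deriv_const,
    deriv_id'', deriv_pow_field, deriv_const_mul_id]
  ext i j
  fin_cases i <;> fin_cases j <;> simp <;> ring

def axisMatrix (p d s : ℝ) : Matrix (Fin 3) (Fin 3) ℝ := !![p, 0, 0; 0, d, s; 0, s, d]

section axisMatrix

open Matrix

variable (p d s : ℝ)

lemma axisMatrix_mulVec (x : Fin 3 → ℝ) :
    axisMatrix p d s *ᵥ x = ![p * x 0, d * x 1 + s * x 2, s * x 1 + d * x 2] := by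
  ext i
  fin_cases i <;> simp [axisMatrix, mulVec, dotProduct, Fin.sum_univ_three]

lemma axisMatrix_hasEigenvalueR_left : (axisMatrix p d s).HasEigenvalueR p :=
  ⟨![1, 0, 0], by simp, by simp [axisMatrix_mulVec]⟩

lemma axisMatrix_hasEigenvalueR_add : (axisMatrix p d s).HasEigenvalueR (d + s) :=
  ⟨![0, 1, 1], by simp, by ext i; fin_cases i <;> simp [axisMatrix_mulVec]; ring⟩

lemma axisMatrix_hasEigenvalueR_sub : (axisMatrix p d s).HasEigenvalueR (d - s) :=
  ⟨![0, 1, -1], by simp, by ext i; fin_cases i <;> simp [axisMatrix_mulVec] <;> ring⟩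

lemma axisMatrix_isHermitian : (axisMatrix p d s).IsHermitian := by
  ext i j
  fin_cases i <;> fin_cases j <;> rfl

lemma dotProduct_axisMatrix_mulVec (x : Fin 3 → ℝ) :
    x ⬝ᵥ axisMatrix p d s *ᵥ x
      = p * x 0 ^ 2 + (d + s) / 2 * (x 1 + x 2) ^ 2 + (d - s) / 2 * (x 1 - x 2) ^ 2 := by
  simp only [dotProduct, axisMatrix_mulVec, Fin.sum_univ_three, cons_val_zero, cons_val_one,
    cons_val]
  ring

lemma axisMatrix_posDef_iff : (axisMatrix p d s).PosDef ↔ 0 < p ∧ |s| < d := by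
  simp only [posDef_iff_dotProduct_mulVec, star_trivial, dotProduct_axisMatrix_mulVec,
    axisMatrix_isHermitian, true_and, abs_lt]
  constructor
  · intro h
    have hfst : 0 < p := by simpa using h (x := ![1, 0, 0]) (by simp)
    have hsum : 0 < d + s := by simpa using h (x := ![0, 1, 1]) (by simp)
    have hdiff : 0 < d - s := by simpa using h (x := ![0, 1, -1]) (by simp)
    exact ⟨hfst, by linarith, by linarith⟩
  · rintro ⟨hp, hsd, hds⟩ x hx
    have hsum : 0 < (d + s) / 2 := by linarith
    have hdiff : 0 < (d - s) / 2 := by linarith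
    have hnz : x 0 ≠ 0 ∨ x 1 + x 2 ≠ 0 ∨ x 1 - x 2 ≠ 0 := by
      by_contra! h
      exact hx (by ext i; fin_cases i <;> simp <;> linarith)
    have h₀ := mul_nonneg hp.le (sq_nonneg (x 0))
    have h₁ := mul_nonneg hsum.le (sq_nonneg (x 1 + x 2))
    have h₂ := mul_nonneg hdiff.le (sq_nonneg (x 1 - x 2))
    rcases hnz with h | h | h
    · linarith [mul_pos hp (sq_pos_of_ne_zero h)]
    · linarith [mul_pos hsum (sq_pos_of_ne_zero h)]
    · linarith [mul_pos hdiff (sq_pos_of_ne_zero h)]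

end axisMatrix

lemma hessV_axis (β a : ℝ) : hessV β a 0 0 =
    axisMatrix (9 * a ^ 2 - 6 * (1 - β ^ 2)) (6 * a ^ 2 - 6 * (1 - β ^ 2)) (6 * √2 * β * a) := by
  rw [hessV_eq, axisMatrix]
  ext i j
  fin_cases i <;> fin_cases j <;> simp <;> ring

lemma hessV_lamellae {β a₀ : ℝ} (hq : 0 ≤ 1 - β ^ 2) (ha₀ : a₀ = √(2 * (1 - β ^ 2))) :
    hessV β a₀ 0 0 =
      axisMatrix (12 * (1 - β ^ 2)) (6 * (1 - β ^ 2)) (12 * β * √(1 - β ^ 2)) := by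
  have ha₀_sq : a₀ ^ 2 = 2 * (1 - β ^ 2) := by rw [ha₀, Real.sq_sqrt (by linarith)]
  have hsqrt_two_mul : √2 * a₀ = 2 * √(1 - β ^ 2) := by
    rw [ha₀, Real.sqrt_mul zero_le_two, ← mul_assoc, Real.mul_self_sqrt zero_le_two]
  rw [hessV_axis]
  congr 1
  · linear_combination 9 * ha₀_sq
  · linear_combination 6 * ha₀_sq
  · linear_combination 6 * β * hsqrt_two_mul

lemma two_mul_lt_sqrt_one_sub_sq_iff {β : ℝ} (hβ : 0 ≤ β) :
    2 * β < √(1 - β ^ 2) ↔ β < 1 / √5 := by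
  rw [Real.lt_sqrt (by positivity), one_div, ← Real.sqrt_inv, Real.lt_sqrt hβ]
  constructor <;> intro h <;> linarith

/-- For `0 ≤ β < 1` and `a₀ = √(2(1 - β²))`, the Hessian of `V_β` at the
lamellar point `(a₀,0,0)` has eigenvalues `12(1-β²)`, `6(1-β²) + 12β√(1-β²)`
and `6(1-β²) - 12β√(1-β²)`; it is positive definite iff `0 ≤ β < 1/√5`. -/
theorem hessian_at_lamellae (β a₀ : ℝ) (hβ0 : 0 ≤ β) (hβ1 : β < 1)
    (ha₀ : a₀ = Real.sqrt (2 * (1 - β ^ 2))) :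
    (hessV β a₀ 0 0).HasEigenvalueR (12 * (1 - β ^ 2)) ∧
    (hessV β a₀ 0 0).HasEigenvalueR
      (6 * (1 - β ^ 2) + 12 * β * Real.sqrt (1 - β ^ 2)) ∧
    (hessV β a₀ 0 0).HasEigenvalueR
      (6 * (1 - β ^ 2) - 12 * β * Real.sqrt (1 - β ^ 2)) ∧
    ((hessV β a₀ 0 0).PosDef ↔ β < 1 / Real.sqrt 5) := by
  have hq : 0 < 1 - β ^ 2 := by nlinarith
  rw [hessV_lamellae hq.le ha₀, axisMatrix_posDef_iff, abs_of_nonneg (by positivity),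
    ← two_mul_lt_sqrt_one_sub_sq_iff hβ0]
  refine ⟨axisMatrix_hasEigenvalueR_left .., axisMatrix_hasEigenvalueR_add ..,
    axisMatrix_hasEigenvalueR_sub .., ?_⟩
  have hr_pos : 0 < √(1 - β ^ 2) := Real.sqrt_pos.mpr hq
  have hr_sq : √(1 - β ^ 2) ^ 2 = 1 - β ^ 2 := Real.sq_sqrt hq.le
  constructor
  · rintro ⟨-, h⟩
    nlinarith
  · intro h
    exact ⟨by linarith, by nlinarith⟩
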